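/- arXiv:2505.06955 — 2 statements merged into one kernel-verified Lean document; each statement's English description precedes it below -/
import Mathlib

section
/- n-qubit quantum one-time pad: for any density matrix ρ on (ℂ²)^⊗n, (1/4^n) Σ_{a,b ∈ {0,1}^n} X^a Z^b ρ (X^a Z^b)† = I/2^n, where X^a = X^{a₁} ⊗ ⋯ ⊗ X^{aₙ} and similarly for Z^b. -/
/-!
Conjugation by `X^a Z^b` sends the entry `ρ (i + a) (j + a)` to position `(i, j)`, multiplied by the
signs `(-1)^(b·(i+a)) (-1)^(b·(j+a))`. Summing over `b` is character orthogonality on `(ℤ/2)ⁿ`: it kills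
every off-diagonal entry and multiplies diagonal ones by `2ⁿ`. Summing the surviving diagonal entries
`ρ (i + a) (i + a)` over `a` gives `trace ρ`, so the average is `(trace ρ / 2ⁿ) • 1`.
-/

noncomputable section

open Finset Matrix ComplexOrder

def X : Matrix (Fin 2) (Fin 2) ℂ := !![0, 1; 1, 0]
def Z : Matrix (Fin 2) (Fin 2) ℂ := !![1, 0; 0, -1]

/-- The tensor (Kronecker) product `X^{a₁} ⊗ ⋯ ⊗ X^{aₙ}` for a bit string `a`. -/
def Xpow {n : ℕ} (a : Fin n → Fin 2) :
    Matrix (Fin n → Fin 2) (Fin n → Fin 2) ℂ :=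
  fun i j => ∏ k, (X ^ ((a k : ℕ))) (i k) (j k)

/-- The tensor (Kronecker) product `Z^{b₁} ⊗ ⋯ ⊗ Z^{bₙ}` for a bit string `b`. -/
def Zpow {n : ℕ} (b : Fin n → Fin 2) :
    Matrix (Fin n → Fin 2) (Fin n → Fin 2) ℂ :=
  fun i j => ∏ k, (Z ^ ((b k : ℕ))) (i k) (j k)

lemma X_pow_apply (c i j : Fin 2) : (X ^ (c : ℕ)) i j = if j = i + c then 1 else 0 := by
  fin_cases c <;> fin_cases i <;> fin_cases j <;> simp [X, pow_succ, one_apply]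

lemma Z_pow_apply (c i j : Fin 2) :
    (Z ^ (c : ℕ)) i j = if i = j then (-1 : ℂ) ^ ((c : ℕ) * (i : ℕ)) else 0 := by
  fin_cases c <;> fin_cases i <;> fin_cases j <;> simp [Z, pow_succ, one_apply]

lemma sum_neg_one_pow_mul_neg_one_pow (x y : Fin 2) :
    ∑ c : Fin 2, (-1 : ℂ) ^ ((c : ℕ) * (x : ℕ)) * (-1 : ℂ) ^ ((c : ℕ) * (y : ℕ)) =
      if x = y then 2 else 0 := by
  fin_cases x <;> fin_cases y <;> norm_num [Fin.sum_univ_two]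

def zPhase {n : ℕ} (b v : Fin n → Fin 2) : ℂ := ∏ k, (-1 : ℂ) ^ ((b k : ℕ) * (v k : ℕ))

lemma star_zPhase {n : ℕ} (b v : Fin n → Fin 2) : star (zPhase b v) = zPhase b v := by
  simp [zPhase]

lemma sum_zPhase_mul_zPhase {n : ℕ} (u v : Fin n → Fin 2) :
    ∑ b : Fin n → Fin 2, zPhase b u * zPhase b v = if u = v then (2 : ℂ) ^ n else 0 := by
  simp_rw [zPhase, ← prod_mul_distrib]
  rw [← Fintype.prod_sum fun k (c : Fin 2) =>
    (-1 : ℂ) ^ ((c : ℕ) * (u k : ℕ)) * (-1 : ℂ) ^ ((c : ℕ) * (v k : ℕ))]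
  simp_rw [sum_neg_one_pow_mul_neg_one_pow, prod_ite_zero, prod_const, card_univ,
    Fintype.card_fin, mem_univ, true_implies, ← funext_iff]

section

variable {n : ℕ}

lemma Xpow_apply (a i j : Fin n → Fin 2) : Xpow a i j = if j = i + a then 1 else 0 := by
  simp_rw [Xpow, X_pow_apply, prod_boole, mem_univ, true_implies, funext_iff, Pi.add_apply]

lemma Zpow_apply (b i j : Fin n → Fin 2) : Zpow b i j = if i = j then zPhase b i else 0 := by
  split_ifs with h
  · subst h
    simp [Zpow, zPhase, Z_pow_apply]
  · obtain ⟨k, hk⟩ := Function.ne_iff.mp h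
    exact prod_eq_zero (mem_univ k) (by rw [Z_pow_apply, if_neg hk])

lemma Xpow_mul_Zpow_apply (a b i j : Fin n → Fin 2) :
    (Xpow a * Zpow b) i j = if j = i + a then zPhase b j else 0 := by
  rw [mul_apply, sum_eq_single (i + a) (fun m _ hm => by rw [Xpow_apply, if_neg hm, zero_mul])
    (by simp)]
  simp only [Xpow_apply, Zpow_apply, if_pos, one_mul]
  grind

lemma Xpow_mul_Zpow_conj_apply (a b : Fin n → Fin 2) (ρ : Matrix (Fin n → Fin 2) (Fin n → Fin 2) ℂ)
    (i j : Fin n → Fin 2) :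
    ((Xpow a * Zpow b) * ρ * (Xpow a * Zpow b)ᴴ) i j =
      zPhase b (i + a) * zPhase b (j + a) * ρ (i + a) (j + a) := by
  rw [mul_apply, sum_eq_single (j + a) (fun l _ hl => by
      simp [conjTranspose_apply, Xpow_mul_Zpow_apply, if_neg hl]) (by simp),
    mul_apply, sum_eq_single (i + a) (fun m _ hm => by
      rw [Xpow_mul_Zpow_apply, if_neg hm, zero_mul]) (by simp)]
  simp only [conjTranspose_apply, Xpow_mul_Zpow_apply, if_pos, star_zPhase]
  ring

lemma sum_diag_add_eq_trace (ρ : Matrix (Fin n → Fin 2) (Fin n → Fin 2) ℂ) (i : Fin n → Fin 2) :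
    ∑ a, ρ (i + a) (i + a) = ρ.trace :=
  Fintype.sum_equiv (Equiv.addLeft i) _ _ fun _ => rfl

theorem sum_Xpow_mul_Zpow_conj (ρ : Matrix (Fin n → Fin 2) (Fin n → Fin 2) ℂ) :
    ∑ a : Fin n → Fin 2, ∑ b : Fin n → Fin 2, (Xpow a * Zpow b) * ρ * (Xpow a * Zpow b)ᴴ =
      ((2 : ℂ) ^ n * ρ.trace) • (1 : Matrix (Fin n → Fin 2) (Fin n → Fin 2) ℂ) := by
  ext i j
  simp_rw [Matrix.sum_apply, Xpow_mul_Zpow_conj_apply, ← sum_mul, sum_zPhase_mul_zPhase, add_left_inj,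
    Matrix.smul_apply, smul_eq_mul]
  by_cases hij : i = j
  · subst hij
    simp [← mul_sum, sum_diag_add_eq_trace]
  · simp [hij]

end

theorem qotp_n_qubit_general (n : ℕ) (ρ : Matrix (Fin n → Fin 2) (Fin n → Fin 2) ℂ)
    (htr : ρ.trace = 1) :
    ((1 : ℂ) / 4 ^ n) • ∑ a : Fin n → Fin 2, ∑ b : Fin n → Fin 2,
        (Xpow a * Zpow b) * ρ * (Xpow a * Zpow b)ᴴ =
      ((1 : ℂ) / 2 ^ n) • (1 : Matrix (Fin n → Fin 2) (Fin n → Fin 2) ℂ) := by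
  rw [sum_Xpow_mul_Zpow_conj, htr, smul_smul]
  congr 1
  rw [show (4 : ℂ) ^ n = 2 ^ n * 2 ^ n by rw [← mul_pow]; norm_num]
  field_simp

/-- the `n`-qubit quantum one-time pad completely randomizes any state. -/
theorem qotp_n_qubit (n : ℕ) (ρ : Matrix (Fin n → Fin 2) (Fin n → Fin 2) ℂ)
    (hpos : ρ.PosSemidef) (htr : ρ.trace = 1) :
    ((1 : ℂ) / 4 ^ n) • ∑ a : Fin n → Fin 2, ∑ b : Fin n → Fin 2,
        (Xpow a * Zpow b) * ρ * (Xpow a * Zpow b)ᴴ =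
      ((1 : ℂ) / 2 ^ n) • (1 : Matrix (Fin n → Fin 2) (Fin n → Fin 2) ℂ) :=
  qotp_n_qubit_general n ρ htr

end
end

section
/- Homomorphic correctness for Clifford+T circuits on product encryption: let C = Ω₁ ⊗ T ⊗ Ω₃ act on three qubits, where Ω₁, Ω₃ ∈ {X, Z, H, S} and T is replaced in the evaluated circuit by R_z((-1)^{a₂} π/4) on the second qubit. Then applying the replaced circuit to the encrypted state (X^{a₁}Z^{b₁} ⊗ X^{a₂}Z^{b₂} ⊗ X^{a₃}Z^{b₃})|ω⟩ yields, up to a global phase of modulus 1, (X^{a₁'}Z^{b₁'} ⊗ X^{a₂}Z^{b₂} ⊗ X^{a₃'}Z^{b₃'}) C |ω⟩, where (aᵢ', bᵢ') are the updated keys: (a,b) for X, Z; (b,a) for H; (a, a⊕b) for S. -/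
open Matrix Kronecker

noncomputable section

def H : Matrix (Fin 2) (Fin 2) ℂ := ((Real.sqrt 2 : ℂ))⁻¹ • !![1, 1; 1, -1]
def S : Matrix (Fin 2) (Fin 2) ℂ := !![1, 0; 0, Complex.I]
def T : Matrix (Fin 2) (Fin 2) ℂ :=
  !![1, 0; 0, Complex.exp (Complex.I * (Real.pi / 4))]
def Rz (θ : ℝ) : Matrix (Fin 2) (Fin 2) ℂ :=
  !![Complex.exp (-(Complex.I * θ / 2)), 0; 0, Complex.exp (Complex.I * θ / 2)]

/-- QOTP encryption operator `X^a Z^b`. -/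
def enc (a b : Fin 2) : Matrix (Fin 2) (Fin 2) ℂ := X ^ (a : ℕ) * Z ^ (b : ℕ)

/-- The key-update rule: `(a,b) ↦ (a,b)` for `X` and `Z`, `(a,b) ↦ (b,a)` for `H`,
and `(a,b) ↦ (a, a⊕b)` for `S`. -/
def KeyUpd (Ω : Matrix (Fin 2) (Fin 2) ℂ) (a b a' b' : Fin 2) : Prop :=
  ((Ω = X ∨ Ω = Z) ∧ a' = a ∧ b' = b) ∨
    (Ω = H ∧ a' = b ∧ b' = a) ∨
    (Ω = S ∧ a' = a ∧ b' = a + b)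

/-! Each gate Ω ∈ {X, Z, H, S} conjugates the one-time pad `X^a Z^b` into `X^a' Z^b'` with the
updated keys, up to a phase. On the middle qubit, `X` flips the angle of `R_z` while `Z` commutes
with it, so the sign `(-1)^a₂` makes `R_z` commute with the pad, and `R_z(π/4) = e^{-iπ/8} T`.
Phases multiply under the Kronecker product, so the three single-qubit relations give the
three-qubit one. -/

def EqUpToPhase {m n : Type*} (M N : Matrix m n ℂ) : Prop :=
  ∃ c : ℂ, ‖c‖ = 1 ∧ M = c • N

theorem EqUpToPhase.kronecker {l m n p : Type*} {M N : Matrix l m ℂ} {M' N' : Matrix n p ℂ}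
    (h : EqUpToPhase M N) (h' : EqUpToPhase M' N') : EqUpToPhase (M ⊗ₖ M') (N ⊗ₖ N') := by
  obtain ⟨c, hc, rfl⟩ := h
  obtain ⟨c', hc', rfl⟩ := h'
  exact ⟨c * c', by simp [hc, hc'], by rw [smul_kronecker, kronecker_smul, smul_smul]⟩

theorem X_mul_enc (a b : Fin 2) : X * enc a b = (-1 : ℂ) ^ (b : ℕ) • (enc a b * X) := by
  fin_cases a <;> fin_cases b <;> ext i j <;> fin_cases i <;> fin_cases j <;>
    simp [enc, X, Z, mul_apply, one_apply, Fin.sum_univ_succ]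

theorem Z_mul_enc (a b : Fin 2) : Z * enc a b = (-1 : ℂ) ^ (a : ℕ) • (enc a b * Z) := by
  fin_cases a <;> fin_cases b <;> ext i j <;> fin_cases i <;> fin_cases j <;>
    simp [enc, X, Z, mul_apply, one_apply, Fin.sum_univ_succ]

theorem H_mul_enc (a b : Fin 2) : H * enc a b = (-1 : ℂ) ^ ((a : ℕ) * b) • (enc b a * H) := by
  fin_cases a <;> fin_cases b <;> ext i j <;> fin_cases i <;> fin_cases j <;>
    simp [enc, X, Z, H, mul_apply, one_apply, Fin.sum_univ_succ]

theorem S_mul_enc (a b : Fin 2) : S * enc a b = Complex.I ^ (a : ℕ) • (enc a (a + b) * S) := by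
  fin_cases a <;> fin_cases b <;> ext i j <;> fin_cases i <;> fin_cases j <;>
    simp [enc, X, Z, S, mul_apply, one_apply, Fin.sum_univ_succ]

theorem Rz_mul_enc (θ : ℝ) (a b : Fin 2) :
    Rz ((-1 : ℝ) ^ (a : ℕ) * θ) * enc a b = enc a b * Rz θ := by
  fin_cases a <;> fin_cases b <;> ext i j <;> fin_cases i <;> fin_cases j <;>
    simp [enc, X, Z, Rz, mul_apply, one_apply, Fin.sum_univ_succ, neg_div]

theorem Rz_pi_div_four : Rz (Real.pi / 4) = Complex.exp (-(Complex.I * (Real.pi / 8))) • T := by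
  ext i j
  fin_cases i <;> fin_cases j <;> simp only [Rz, T, smul_of, of_apply] <;>
    simp [← Complex.exp_add] <;> congr 1 <;> ring

theorem eqUpToPhase_Rz_mul_enc (a b : Fin 2) :
    EqUpToPhase (Rz ((-1 : ℝ) ^ (a : ℕ) * (Real.pi / 4)) * enc a b) (enc a b * T) := by
  refine ⟨Complex.exp (-(Complex.I * (Real.pi / 8))), ?_, ?_⟩
  · rw [Complex.norm_exp]
    simp
  · rw [Rz_mul_enc, Rz_pi_div_four, mul_smul_comm]

theorem KeyUpd.eqUpToPhase_mul_enc {Ω : Matrix (Fin 2) (Fin 2) ℂ} {a b a' b' : Fin 2}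
    (h : KeyUpd Ω a b a' b') : EqUpToPhase (Ω * enc a b) (enc a' b' * Ω) := by
  rcases h with ⟨rfl | rfl, rfl, rfl⟩ | ⟨rfl, rfl, rfl⟩ | ⟨rfl, rfl, rfl⟩
  · exact ⟨_, by simp, X_mul_enc _ _⟩
  · exact ⟨_, by simp, Z_mul_enc _ _⟩
  · exact ⟨_, by simp, H_mul_enc _ _⟩
  · exact ⟨_, by simp, S_mul_enc _ _⟩

/-- homomorphic correctness for the circuit `C = Ω₁ ⊗ T ⊗ Ω₃` with the `T`-gate
replaced by `R_z((-1)^{a₂} π/4)`: applying the replaced circuit to the encrypted state yields,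
up to a global phase of modulus 1, the re-encryption (with updated keys) of `C |ω⟩`. -/
theorem homomorphic_correctness_clifford_T
    (Ω₁ Ω₃ : Matrix (Fin 2) (Fin 2) ℂ)
    (a₁ b₁ a₂ b₂ a₃ b₃ a₁' b₁' a₃' b₃' : Fin 2)
    (h₁ : KeyUpd Ω₁ a₁ b₁ a₁' b₁') (h₃ : KeyUpd Ω₃ a₃ b₃ a₃' b₃') :
    ∃ c : ℂ, ‖c‖ = 1 ∧
      ∀ ω : Fin 2 × Fin 2 × Fin 2 → ℂ,
        (Ω₁ ⊗ₖ (Rz ((-1 : ℝ) ^ (a₂ : ℕ) * (Real.pi / 4)) ⊗ₖ Ω₃)).mulVec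
            ((enc a₁ b₁ ⊗ₖ (enc a₂ b₂ ⊗ₖ enc a₃ b₃)).mulVec ω) =
          c • (enc a₁' b₁' ⊗ₖ (enc a₂ b₂ ⊗ₖ enc a₃' b₃')).mulVec
            ((Ω₁ ⊗ₖ (T ⊗ₖ Ω₃)).mulVec ω) := by
  obtain ⟨c, hc, hcircuit⟩ := h₁.eqUpToPhase_mul_enc.kronecker
    ((eqUpToPhase_Rz_mul_enc a₂ b₂).kronecker h₃.eqUpToPhase_mul_enc)
  simp only [mul_kronecker_mul] at hcircuit
  refine ⟨c, hc, fun ω => ?_⟩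
  rw [mulVec_mulVec, hcircuit, smul_mulVec, mulVec_mulVec]

end
end
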